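/- Let p ∈ (1,∞) and f ∈ L^p(ℝ). Suppose there is x₀ ∈ ℝ where the one-sided limits f(x₀+) and f(x₀−) exist and f(x₀+) ≠ f(x₀−). Then for every δ > 0, the Stein derivative 𝒟^{1/p} f is not in L^p(B(x₀,δ)); consequently f ∉ L^p_{1/p}(ℝ) = (1-Δ)^{-1/(2p)} L^p(ℝ). -/

import Mathlib

open MeasureTheory ENNReal

/-- The Stein derivative of order `b`, valued in `ℝ≥0∞`:
`𝒟^b f(x) = (∫ |f(x)-f(y)|²/|x-y|^{1+2b} dy)^{1/2}`. -/
noncomputable def steinD (b : ℝ) (f : ℝ → ℂ) (x : ℝ) : ℝ≥0∞ :=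
  (∫⁻ y : ℝ, ((‖f x - f y‖₊ : ℝ≥0∞) ^ 2 / ENNReal.ofReal (|x - y| ^ (1 + 2 * b)))) ^ (1/2 : ℝ)

lemma real_calc {c t p : ℝ} (hc : 0 < c) (ht : 0 < t) (hp : 1 < p) :
    (((2*c)^2 / (2*t)^(1+2*(1/p)) * t)) ^ (p/2)
      = (2*c)^p * (2:ℝ)^(-((p+2)/2)) * t⁻¹ := by
  have hp0 : (0:ℝ) < p := by linarith
  have h2c : (0:ℝ) < 2*c := by linarith
  have h2t : (0:ℝ) < 2*t := by linarith
  have he : (1 + 2*(1/p)) * (p/2) = (p+2)/2 := by field_simp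
  rw [div_mul_eq_mul_div, Real.div_rpow (by positivity) (by positivity),
    Real.mul_rpow (by positivity) ht.le,
    ← Real.rpow_natCast (2*c) 2, ← Real.rpow_mul h2c.le,
    ← Real.rpow_mul h2t.le, he,
    Real.mul_rpow (by norm_num : (0:ℝ) ≤ 2) ht.le]
  have h1 : (Nat.cast 2 : ℝ) * (p/2) = p := by push_cast; ring
  rw [h1, Real.rpow_neg (by norm_num : (0:ℝ) ≤ 2)]
  rw [div_eq_mul_inv, mul_inv, ← mul_assoc]
  have ht1 : t ^ (p/2) * (t ^ ((p+2)/2))⁻¹ = t⁻¹ := by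
    rw [← Real.rpow_neg ht.le, ← Real.rpow_add ht]
    have : p/2 + -((p+2)/2) = -1 := by ring
    rw [this, Real.rpow_neg_one]
  calc (2*c)^p * t^(p/2) * ((2:ℝ)^((p+2)/2))⁻¹ * (t^((p+2)/2))⁻¹
      = (2*c)^p * ((2:ℝ)^((p+2)/2))⁻¹ * (t^(p/2) * (t^((p+2)/2))⁻¹) := by ring
    _ = (2*c)^p * ((2:ℝ)^((p+2)/2))⁻¹ * t⁻¹ := by rw [ht1]

lemma key_bound {p : ℝ} (hp : 1 < p) (f : ℝ → ℂ) (x₀ : ℝ) {c ε : ℝ} (hc : 0 < c) (hε : 0 < ε)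
    (hfar : ∀ x ∈ Set.Ioo x₀ (x₀ + ε), ∀ y ∈ Set.Ioo (x₀ - ε) x₀, 2*c ≤ ‖f x - f y‖)
    {x : ℝ} (hx : x ∈ Set.Ioo x₀ (x₀ + ε)) :
    ENNReal.ofReal ((2*c)^p * (2:ℝ)^(-((p+2)/2))) * ENNReal.ofReal (x - x₀)⁻¹
      ≤ (steinD (1/p) f x) ^ p := by
  have hp0 : (0:ℝ) < p := by linarith
  set t := x - x₀ with htdef
  have ht : 0 < t := sub_pos.2 hx.1
  have ht' : t < ε := by have := hx.2; simp only [htdef]; linarith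
  have h2t : (0:ℝ) < 2*t := by linarith
  have hexp : (0:ℝ) < 1 + 2*(1/p) := by positivity
  set E : ℝ := 1 + 2*(1/p) with hE
  set B : ℝ := (2*c)^2 / (2*t)^E with hB
  have hBpos : 0 < B := by
    apply div_pos (by positivity) (Real.rpow_pos_of_pos h2t E)
  have hApos : 0 < B * t := by positivity
  have hsub : Set.Ioo (x₀ - t) x₀ ⊆ Set.Ioo (x₀ - ε) x₀ :=
    Set.Ioo_subset_Ioo (by linarith) le_rfl
  have hpt : ∀ y ∈ Set.Ioo (x₀ - t) x₀,
      ENNReal.ofReal B ≤ (‖f x - f y‖₊ : ℝ≥0∞)^2 / ENNReal.ofReal (|x - y|^E) := by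
    intro y hy
    have h2c : 2*c ≤ ‖f x - f y‖ := hfar x hx y (hsub hy)
    have hxy : |x - y| ≤ 2*t := by
      rw [abs_of_pos (by rcases hy with ⟨h1, h2⟩; rcases hx with ⟨h3, h4⟩; linarith)]
      rcases hy with ⟨h1, h2⟩; simp only [htdef]; linarith
    rw [hB, ENNReal.ofReal_div_of_pos (Real.rpow_pos_of_pos h2t E)]
    refine ENNReal.div_le_div ?_ ?_
    · rw [← ENNReal.ofReal_coe_nnreal, coe_nnnorm, ← ENNReal.ofReal_pow (norm_nonneg _)]
      exact ENNReal.ofReal_le_ofReal (by nlinarith [norm_nonneg (f x - f y)])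
    · exact ENNReal.ofReal_le_ofReal (Real.rpow_le_rpow (abs_nonneg _) hxy hexp.le)
  have hlow : ENNReal.ofReal (B * t)
      ≤ ∫⁻ y : ℝ, ((‖f x - f y‖₊ : ℝ≥0∞) ^ 2 / ENNReal.ofReal (|x - y| ^ E)) := by
    calc ENNReal.ofReal (B * t)
        = ENNReal.ofReal B * volume (Set.Ioo (x₀ - t) x₀) := by
          rw [Real.volume_Ioo, ENNReal.ofReal_mul hBpos.le]
          congr 1; · congr 1; ring
      _ = ∫⁻ _ in Set.Ioo (x₀ - t) x₀, ENNReal.ofReal B := (setLIntegral_const _ _).symm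
      _ ≤ ∫⁻ y in Set.Ioo (x₀ - t) x₀,
            ((‖f x - f y‖₊ : ℝ≥0∞) ^ 2 / ENNReal.ofReal (|x - y| ^ E)) :=
          setLIntegral_mono' measurableSet_Ioo hpt
      _ ≤ _ := setLIntegral_le_lintegral _ _
  have hsd : ENNReal.ofReal (B * t) ^ ((1:ℝ)/2) ≤ steinD (1/p) f x := by
    rw [steinD]
    exact ENNReal.rpow_le_rpow (by rw [hE] at hlow; exact_mod_cast hlow) (by norm_num)
  have h2 : (ENNReal.ofReal (B * t) ^ ((1:ℝ)/2)) ^ p ≤ steinD (1/p) f x ^ p :=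
    ENNReal.rpow_le_rpow hsd hp0.le
  have h3 : (ENNReal.ofReal (B * t) ^ ((1:ℝ)/2)) ^ p = ENNReal.ofReal ((B * t) ^ (p/2)) := by
    rw [← ENNReal.rpow_mul, ENNReal.ofReal_rpow_of_pos hApos]
    ring_nf
  rw [← ENNReal.ofReal_mul (by positivity), ← real_calc hc ht hp]
  rw [h3] at h2
  exact h2
lemma lint_inv_top {a : ℝ} (ha : 0 < a) :
    ∫⁻ t in Set.Ioo (0:ℝ) a, ENNReal.ofReal t⁻¹ = ⊤ := by
  by_contra h
  have hint : IntegrableOn (fun t : ℝ => t⁻¹) (Set.Ioo 0 a) := by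
    refine ⟨measurable_inv.aestronglyMeasurable, ?_⟩
    rw [hasFiniteIntegral_iff_ofReal ?_]
    · exact lt_top_iff_ne_top.2 h
    · filter_upwards [ae_restrict_mem measurableSet_Ioo] with x hx
      exact inv_nonneg.2 hx.1.le
  have : IntegrableOn (fun t : ℝ => t ^ (-1 : ℝ)) (Set.Ioo 0 a) := by
    refine hint.congr_fun (fun x hx => ?_) measurableSet_Ioo
    rw [Real.rpow_neg_one]
  rw [intervalIntegral.integrableOn_Ioo_rpow_iff ha] at this
  linarith

lemma lint_inv_shift_top (x₀ : ℝ) {a : ℝ} (ha : 0 < a) :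
    ∫⁻ x in Set.Ioo x₀ (x₀ + a), ENNReal.ofReal (x - x₀)⁻¹ = ⊤ := by
  have hmp : MeasurePreserving (fun x : ℝ => x - x₀) volume volume :=
    measurePreserving_sub_right volume x₀
  have hpre : (fun x : ℝ => x - x₀) ⁻¹' Set.Ioo 0 a = Set.Ioo x₀ (x₀ + a) := by
    ext x; simp [Set.mem_Ioo, sub_pos, sub_lt_iff_lt_add', add_comm]
  have := hmp.setLIntegral_comp_preimage (s := Set.Ioo 0 a)
    (f := fun t => ENNReal.ofReal t⁻¹) measurableSet_Ioo
    (ENNReal.measurable_ofReal.comp measurable_inv)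
  rw [hpre] at this
  rw [this, lint_inv_top ha]

/-- If `p ∈ (1,∞)`, `f ∈ L^p(ℝ)` and `f` has distinct one-sided limits at some point `x₀`,
then for every `δ > 0` the Stein derivative `𝒟^{1/p} f` fails to be in `L^p(B(x₀,δ))`;
consequently (via Stein's characterization `f ∈ L^p_{1/p} ↔ f ∈ L^p ∧ 𝒟^{1/p}f ∈ L^p`)
`f ∉ L^p_{1/p}(ℝ)`. -/
theorem stmt18 (p : ℝ) (hp : 1 < p) (f : ℝ → ℂ)
    (hf : MemLp f (ENNReal.ofReal p) volume)
    (x₀ : ℝ) (L R : ℂ)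
    (hL : Filter.Tendsto f (nhdsWithin x₀ (Set.Iio x₀)) (nhds L))
    (hR : Filter.Tendsto f (nhdsWithin x₀ (Set.Ioi x₀)) (nhds R))
    (hne : L ≠ R) :
    (∀ δ : ℝ, 0 < δ →
      (∫⁻ x in Metric.ball x₀ δ, (steinD (1/p) f x) ^ p) = ⊤)
    ∧ ¬ (MemLp f (ENNReal.ofReal p) volume ∧ (∫⁻ x : ℝ, (steinD (1/p) f x) ^ p) < ⊤) := by
  have hRL : (0:ℝ) < ‖R - L‖ := by
    rw [norm_pos_iff]; exact sub_ne_zero.2 (Ne.symm hne)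
  set c : ℝ := ‖R - L‖ / 4 with hcdef
  have hc : 0 < c := by positivity
  obtain ⟨ε₁, hε₁, hLε⟩ := (Metric.tendsto_nhdsWithin_nhds.1 hL) c hc
  obtain ⟨ε₂, hε₂, hRε⟩ := (Metric.tendsto_nhdsWithin_nhds.1 hR) c hc
  set ε : ℝ := min ε₁ ε₂ with hεdef
  have hε : 0 < ε := lt_min hε₁ hε₂
  have hfar : ∀ x ∈ Set.Ioo x₀ (x₀ + ε), ∀ y ∈ Set.Ioo (x₀ - ε) x₀, 2*c ≤ ‖f x - f y‖ := by
    intro x hx y hy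
    have hxd : dist (f x) R < c := by
      apply hRε hx.1
      rw [Real.dist_eq, abs_of_pos (sub_pos.2 hx.1)]
      have hεle : ε ≤ ε₂ := min_le_right _ _
      have h1 := hx.2
      linarith
    have hyd : dist (f y) L < c := by
      apply hLε hy.2
      rw [Real.dist_eq, abs_of_neg (sub_neg.2 hy.2)]
      have hεle : ε ≤ ε₁ := min_le_left _ _
      have h1 := hy.1
      linarith
    rw [dist_eq_norm] at hxd hyd
    have htri : ‖R - L‖ ≤ ‖f x - R‖ + ‖f x - f y‖ + ‖f y - L‖ := by
      calc ‖R - L‖ = ‖(R - f x) + ((f x - f y) + (f y - L))‖ := by ring_nf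
        _ ≤ ‖R - f x‖ + ‖(f x - f y) + (f y - L)‖ := norm_add_le _ _
        _ ≤ ‖R - f x‖ + (‖f x - f y‖ + ‖f y - L‖) := by
            exact add_le_add le_rfl (norm_add_le _ _)
        _ = ‖f x - R‖ + ‖f x - f y‖ + ‖f y - L‖ := by rw [norm_sub_rev]; ring
    have h4c : ‖R - L‖ = 4 * c := by rw [hcdef]; ring
    linarith
  set K : ℝ≥0∞ := ENNReal.ofReal ((2*c)^p * (2:ℝ)^(-((p+2)/2))) with hKdef
  have hK0 : K ≠ 0 := by
    rw [hKdef]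
    simp only [ne_eq, ENNReal.ofReal_eq_zero, not_le]
    positivity
  have hmain : ∀ δ : ℝ, 0 < δ →
      (∫⁻ x in Metric.ball x₀ δ, (steinD (1/p) f x) ^ p) = ⊤ := by
    intro δ hδ
    set a : ℝ := min ε δ with hadef
    have ha : 0 < a := lt_min hε hδ
    have hsub1 : Set.Ioo x₀ (x₀ + a) ⊆ Metric.ball x₀ δ := by
      intro x hx
      rw [Metric.mem_ball, Real.dist_eq, abs_of_pos (sub_pos.2 hx.1)]
      have := hx.2
      have h1 : x - x₀ < a := by linarith
      exact lt_of_lt_of_le h1 (min_le_right _ _)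
    have hsub2 : Set.Ioo x₀ (x₀ + a) ⊆ Set.Ioo x₀ (x₀ + ε) :=
      Set.Ioo_subset_Ioo le_rfl (by have := min_le_left ε δ; linarith)
    have h1 : (∫⁻ x in Set.Ioo x₀ (x₀ + a), K * ENNReal.ofReal (x - x₀)⁻¹) = ⊤ := by
      rw [lintegral_const_mul' K _ ENNReal.ofReal_ne_top, lint_inv_shift_top x₀ ha,
        ENNReal.mul_top hK0]
    have h2 : (∫⁻ x in Set.Ioo x₀ (x₀ + a), K * ENNReal.ofReal (x - x₀)⁻¹)
        ≤ ∫⁻ x in Set.Ioo x₀ (x₀ + a), (steinD (1/p) f x) ^ p :=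
      setLIntegral_mono' measurableSet_Ioo fun x hx => key_bound hp f x₀ hc hε hfar (hsub2 hx)
    have h3 : (∫⁻ x in Set.Ioo x₀ (x₀ + a), (steinD (1/p) f x) ^ p)
        ≤ ∫⁻ x in Metric.ball x₀ δ, (steinD (1/p) f x) ^ p :=
      lintegral_mono_set hsub1
    rw [h1] at h2
    exact top_le_iff.1 (le_trans h2 h3)
  refine ⟨hmain, ?_⟩
  rintro ⟨-, hfin⟩
  have h1 := hmain 1 one_pos
  have h2 : (∫⁻ x in Metric.ball x₀ 1, (steinD (1/p) f x) ^ p) ≤ ∫⁻ x : ℝ, (steinD (1/p) f x) ^ p :=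
    setLIntegral_le_lintegral _ _
  rw [h1] at h2
  exact absurd (lt_of_le_of_lt h2 hfin) (lt_irrefl ⊤)
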